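/- arXiv:1010.2865 — 2 statements merged into one kernel-verified Lean document; each statement's English description precedes it below -/
import Mathlib

section
/- If E(w) ≠ ∅ for some w ∈ Ker A^D, then E°(λw) ≠ ∅ for every λ ∈ [0,1). Consequently, 𝔇° is the interior of 𝔇 relative to Ker A^D. -/
open Filter Topology

noncomputable section

/-- `g_i(w) = (1/2) wᵀ π_i w + (A^C w)_i`. -/
def gfun {m n : ℕ} (π : Fin m → Matrix (Fin n) (Fin n) ℝ)
    (AC : Matrix (Fin m) (Fin n) ℝ) (w : Fin n → ℝ) (i : Fin m) : ℝ :=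
  (1 / 2) * (∑ j, ∑ k, w j * π i j k * w k) + ∑ j, AC i j * w j

/-- `f_i(v,w) = (1/2) v_i² 1_{i∈I} + Σ_{k ≤ i} A^V_{ik} v_k + g_i(w)`. -/
def fRic {m n : ℕ} (I : Finset (Fin m)) (AV : Matrix (Fin m) (Fin m) ℝ)
    (π : Fin m → Matrix (Fin n) (Fin n) ℝ) (AC : Matrix (Fin m) (Fin n) ℝ)
    (v : Fin m → ℝ) (w : Fin n → ℝ) (i : Fin m) : ℝ :=
  (1 / 2) * (v i) ^ 2 * (if i ∈ I then 1 else 0)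
    + (∑ k ∈ Finset.univ.filter (fun k => k ≤ i), AV i k * v k)
    + gfun π AC w i

/-- `E(w) = {v : f_i(v,w) ≤ 0 ∀ i}`. -/
def Eset {m n : ℕ} (I : Finset (Fin m)) (AV : Matrix (Fin m) (Fin m) ℝ)
    (π : Fin m → Matrix (Fin n) (Fin n) ℝ) (AC : Matrix (Fin m) (Fin n) ℝ)
    (w : Fin n → ℝ) : Set (Fin m → ℝ) :=
  {v | ∀ i, fRic I AV π AC v w i ≤ 0}

/-- `E°(w) = {v : f_i(v,w) < 0 ∀ i}`. -/
def EsetO {m n : ℕ} (I : Finset (Fin m)) (AV : Matrix (Fin m) (Fin m) ℝ)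
    (π : Fin m → Matrix (Fin n) (Fin n) ℝ) (AC : Matrix (Fin m) (Fin n) ℝ)
    (w : Fin n → ℝ) : Set (Fin m → ℝ) :=
  {v | ∀ i, fRic I AV π AC v w i < 0}

/-- `𝔇 = {w ∈ Ker A^D : E(w) ≠ ∅}`. -/
def Dset {m n : ℕ} (I : Finset (Fin m)) (AV : Matrix (Fin m) (Fin m) ℝ)
    (π : Fin m → Matrix (Fin n) (Fin n) ℝ) (AC : Matrix (Fin m) (Fin n) ℝ)
    (AD : Matrix (Fin n) (Fin n) ℝ) : Set (Fin n → ℝ) :=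
  {w | AD.mulVec w = 0 ∧ (Eset I AV π AC w).Nonempty}

/-- `𝔇° = {w ∈ Ker A^D : E°(w) ≠ ∅}`. -/
def DsetO {m n : ℕ} (I : Finset (Fin m)) (AV : Matrix (Fin m) (Fin m) ℝ)
    (π : Fin m → Matrix (Fin n) (Fin n) ℝ) (AC : Matrix (Fin m) (Fin n) ℝ)
    (AD : Matrix (Fin n) (Fin n) ℝ) : Set (Fin n → ℝ) :=
  {w | AD.mulVec w = 0 ∧ (EsetO I AV π AC w).Nonempty}

/-! Every `f_i` is jointly convex in `(v, w)`, and `E°(0) ≠ ∅`: with `v_k = t^(m-k)` and `t > 0`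
small, the negative diagonal term `A^V_{ii} t^(m-i)` dominates both the earlier terms, of order
`t^(m-i+1)`, and the quadratic one. So if `v ∈ E(w)` and `u ∈ E°(0)`, then
`λ v + (1-λ) u ∈ E°(λ w)`. A point `x` of the relative interior of `𝔇` has `μ x ∈ 𝔇` for some
`μ > 1`, whence `x = μ⁻¹ (μ x) ∈ 𝔇°`; and `𝔇°` is relatively open since the `f_i` are
continuous. -/

open Set Finset Matrix

theorem Matrix.PosSemidef.convexOn_dotProduct_mulVec {ι : Type*} [Fintype ι]
    {P : Matrix ι ι ℝ} (hP : P.PosSemidef) : ConvexOn ℝ univ fun w : ι → ℝ => w ⬝ᵥ (P *ᵥ w) := by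
  refine ⟨convex_univ, fun x _ y _ a b ha hb hab => ?_⟩
  have hxy : 0 ≤ (x - y) ⬝ᵥ (P *ᵥ (x - y)) := by
    simpa using hP.dotProduct_mulVec_nonneg (x - y)
  have key : (a • x + b • y) ⬝ᵥ (P *ᵥ (a • x + b • y)) + a * b * ((x - y) ⬝ᵥ (P *ᵥ (x - y)))
      = a * (x ⬝ᵥ (P *ᵥ x)) + b * (y ⬝ᵥ (P *ᵥ y)) := by
    simp only [mulVec_add, mulVec_sub, mulVec_smul, dotProduct_add, add_dotProduct,
      dotProduct_sub, sub_dotProduct, dotProduct_smul, smul_dotProduct, smul_eq_mul]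
    linear_combination (a * (x ⬝ᵥ (P *ᵥ x)) + b * (y ⬝ᵥ (P *ᵥ y))) * hab
  simp only [smul_eq_mul]
  nlinarith [mul_nonneg (mul_nonneg ha hb) hxy]

section

variable {m n : ℕ} {I : Finset (Fin m)} {AV : Matrix (Fin m) (Fin m) ℝ}
  {π : Fin m → Matrix (Fin n) (Fin n) ℝ} {AC : Matrix (Fin m) (Fin n) ℝ}

theorem convexOn_fRic {i : Fin m} (hπ : (π i).PosSemidef) :
    ConvexOn ℝ univ fun p : (Fin m → ℝ) × (Fin n → ℝ) => fRic I AV π AC p.1 p.2 i := by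
  let ℓ : (Fin m → ℝ) × (Fin n → ℝ) →ₗ[ℝ] ℝ :=
    ∑ k ∈ univ.filter (· ≤ i), AV i k • (LinearMap.proj k ∘ₗ LinearMap.fst ℝ _ _)
      + ∑ j, AC i j • (LinearMap.proj j ∘ₗ LinearMap.snd ℝ _ _)
  have hsq := ((Even.convexOn_pow (𝕜 := ℝ) even_two).comp_linearMap
    (LinearMap.proj i ∘ₗ LinearMap.fst ℝ (Fin m → ℝ) (Fin n → ℝ))).smul
      (c := (1 / 2 : ℝ) * if i ∈ I then 1 else 0) (by positivity)
  have hquad := (hπ.convexOn_dotProduct_mulVec.comp_linearMap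
    (LinearMap.snd ℝ (Fin m → ℝ) (Fin n → ℝ))).smul (c := (1 / 2 : ℝ)) (by norm_num)
  refine ((hsq.add hquad).add (ℓ.convexOn convex_univ)).congr fun p _ => ?_
  simp only [ℓ, fRic, gfun, dotProduct, mulVec, mul_sum, mul_assoc, one_div, mul_ite, mul_one,
    mul_zero, ite_mul, zero_mul, smul_eq_mul, Function.comp_apply, Function.eval, Pi.add_apply,
    Pi.smul_apply, LinearMap.add_apply, LinearMap.coe_sum, LinearMap.coe_smul, LinearMap.coe_comp,
    LinearMap.coe_proj, LinearMap.coe_fst, LinearMap.coe_snd, Finset.sum_apply]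
  ring

theorem EsetO_subset_Eset (w : Fin n → ℝ) : EsetO I AV π AC w ⊆ Eset I AV π AC w :=
  fun _ hv i => (hv i).le

theorem EsetO_zero_nonempty (hAVdiag : ∀ i, AV i i < 0) : (EsetO I AV π AC 0).Nonempty := by
  let g : Fin m → ℝ → ℝ := fun i t => (1 / 2) * t ^ (m - i : ℕ) * (if i ∈ I then 1 else 0)
    + ∑ k ∈ univ.filter (· ≤ i), AV i k * t ^ (i - k : ℕ)
  have hg0 (i : Fin m) : g i 0 = AV i i := by
    have hmi : m - (i : ℕ) ≠ 0 := by omega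
    simp only [g, zero_pow hmi, mul_zero, zero_mul, zero_add]
    rw [sum_eq_single_of_mem i (by simp) fun k hk hki => ?_]
    · simp
    · have hki' : k < i := lt_of_le_of_ne (by simpa using hk) hki
      simp [zero_pow (Nat.sub_ne_zero_of_lt hki')]
  have hev : ∀ᶠ t in 𝓝[>] 0, ∀ i, g i t < 0 := by
    refine eventually_all.2 fun i => nhdsWithin_le_nhds ?_
    have hcont : Continuous (g i) := by fun_prop
    exact hcont.continuousAt.eventually_lt continuousAt_const (by rw [hg0]; exact hAVdiag i)
  obtain ⟨t, hgt, ht⟩ := (hev.and self_mem_nhdsWithin).exists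
  refine ⟨fun k => t ^ (m - k : ℕ), fun i => ?_⟩
  have hfactor : fRic I AV π AC (fun k => t ^ (m - k : ℕ)) 0 i = t ^ (m - i : ℕ) * g i t := by
    simp only [fRic, gfun, g, Pi.zero_apply, mul_zero, zero_mul, sum_const_zero, add_zero,
      mul_add, mul_sum]
    congr 1
    · ring
    · refine sum_congr rfl fun k hk => ?_
      have hki : (k : ℕ) ≤ i := by simpa using hk
      rw [show m - (k : ℕ) = (m - i) + (i - k) by omega, pow_add]
      ring
  rw [hfactor]
  exact mul_neg_of_pos_of_neg (pow_pos ht _) (hgt i)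

theorem EsetO_smul_nonempty (hAVdiag : ∀ i, AV i i < 0) (hπ : ∀ i, (π i).PosSemidef)
    {w : Fin n → ℝ} (hw : (Eset I AV π AC w).Nonempty) (lam : ℝ) (hlam0 : 0 ≤ lam)
    (hlam1 : lam < 1) : (EsetO I AV π AC (lam • w)).Nonempty := by
  obtain ⟨v, hv⟩ := hw
  obtain ⟨u, hu⟩ := EsetO_zero_nonempty (I := I) (π := π) (AC := AC) hAVdiag
  refine ⟨lam • v + (1 - lam) • u, fun i => ?_⟩
  have hconv := (convexOn_fRic (I := I) (AV := AV) (AC := AC) (hπ i)).2 (mem_univ (v, w))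
    (mem_univ (u, 0)) hlam0 (sub_nonneg.2 hlam1.le) (add_sub_cancel lam 1)
  simp only [Prod.smul_mk, Prod.mk_add_mk, smul_zero, add_zero, smul_eq_mul] at hconv
  have hu' : (1 - lam) * fRic I AV π AC u 0 i < 0 := mul_neg_of_pos_of_neg (by linarith) (hu i)
  nlinarith [mul_nonpos_of_nonneg_of_nonpos hlam0 (hv i)]

theorem isOpen_setOf_EsetO_nonempty : IsOpen {w | (EsetO I AV π AC w).Nonempty} := by
  have hunion : {w | (EsetO I AV π AC w).Nonempty} = ⋃ v, ⋂ i, {w | fRic I AV π AC v w i < 0} := by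
    ext w
    simp [EsetO, Set.Nonempty]
  rw [hunion]
  refine isOpen_iUnion fun v => isOpen_iInter_of_finite fun i => isOpen_lt ?_ continuous_const
  unfold fRic gfun
  fun_prop

end

theorem interior_eq_of_smul_mem {E : Type*} [TopologicalSpace E] [MulAction ℝ E]
    [ContinuousSMul ℝ E] {S D : Set E} (hS : IsOpen S) (hSD : S ⊆ D)
    (hDS : ∀ w ∈ D, ∀ lam : ℝ, 0 < lam → lam < 1 → lam • w ∈ S) : interior D = S := by
  refine Subset.antisymm (fun x hx => ?_) (interior_maximal hSD hS)
  have hev : ∀ᶠ μ in 𝓝[>] (1 : ℝ), μ • x ∈ interior D := by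
    refine nhdsWithin_le_nhds ((continuous_id.smul continuous_const).continuousAt.eventually_mem ?_)
    simpa using isOpen_interior.mem_nhds hx
  obtain ⟨μ, hμD, hμ⟩ := (hev.and self_mem_nhdsWithin).exists
  have hμ1 : (1 : ℝ) < μ := hμ
  have := hDS _ (interior_subset hμD) μ⁻¹ (by positivity) (inv_lt_one_of_one_lt₀ hμ1)
  rwa [smul_smul, inv_mul_cancel₀ (by positivity), one_smul] at this

theorem stmt2_general (m n : ℕ)
    (I : Finset (Fin m))
    (AV : Matrix (Fin m) (Fin m) ℝ)
    (hAVdiag : ∀ i : Fin m, AV i i < 0)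
    (π : Fin m → Matrix (Fin n) (Fin n) ℝ)
    (hπ : ∀ i, (π i).PosSemidef)
    (AC : Matrix (Fin m) (Fin n) ℝ) (AD : Matrix (Fin n) (Fin n) ℝ) :
    (∀ w : Fin n → ℝ, AD.mulVec w = 0 → (Eset I AV π AC w).Nonempty →
      ∀ lam : ℝ, 0 ≤ lam → lam < 1 → (EsetO I AV π AC (lam • w)).Nonempty)
    ∧ (Subtype.val : {w : Fin n → ℝ // AD.mulVec w = 0} → (Fin n → ℝ)) ⁻¹'
          DsetO I AV π AC AD =
        interior ((Subtype.val : {w : Fin n → ℝ // AD.mulVec w = 0} → (Fin n → ℝ)) ⁻¹'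
          Dset I AV π AC AD) := by
  refine ⟨fun w _ hw => EsetO_smul_nonempty hAVdiag hπ hw, ?_⟩
  -- the kernel subtype, seen as a submodule, to get its action of ℝ
  change (Subtype.val : LinearMap.ker AD.mulVecLin → (Fin n → ℝ)) ⁻¹' _
    = interior ((Subtype.val : LinearMap.ker AD.mulVecLin → (Fin n → ℝ)) ⁻¹' _)
  refine (interior_eq_of_smul_mem ?_ ?_ ?_).symm
  · convert isOpen_setOf_EsetO_nonempty.preimage continuous_subtype_val using 1
    ext x
    exact and_iff_right x.2
  · exact fun x hx => ⟨hx.1, hx.2.mono (EsetO_subset_Eset _)⟩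
  · exact fun x hx lam hlam0 hlam1 =>
      ⟨(lam • x).2, EsetO_smul_nonempty hAVdiag hπ hx.2 lam hlam0.le hlam1⟩

/-- if `E(w) ≠ ∅` for some `w ∈ Ker A^D`, then `E°(λw) ≠ ∅` for every
`λ ∈ [0,1)`; consequently `𝔇°` is the interior of `𝔇` relative to `Ker A^D`. -/
theorem stmt2 (m n : ℕ) (hm : 1 ≤ m)
    (I : Finset (Fin m)) (hI : I.Nonempty)
    (AV : Matrix (Fin m) (Fin m) ℝ)
    (hAVtri : ∀ i k : Fin m, i < k → AV i k = 0)
    (hAVdiag : ∀ i : Fin m, AV i i < 0)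
    (hAVoff : ∀ i k : Fin m, i ≠ k → 0 ≤ AV i k)
    (π : Fin m → Matrix (Fin n) (Fin n) ℝ)
    (hπ : ∀ i, (π i).PosSemidef)
    (AC : Matrix (Fin m) (Fin n) ℝ) (AD : Matrix (Fin n) (Fin n) ℝ) :
    (∀ w : Fin n → ℝ, AD.mulVec w = 0 → (Eset I AV π AC w).Nonempty →
      ∀ lam : ℝ, 0 ≤ lam → lam < 1 → (EsetO I AV π AC (lam • w)).Nonempty)
    ∧ (Subtype.val : {w : Fin n → ℝ // AD.mulVec w = 0} → (Fin n → ℝ)) ⁻¹'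
          DsetO I AV π AC AD =
        interior ((Subtype.val : {w : Fin n → ℝ // AD.mulVec w = 0} → (Fin n → ℝ)) ⁻¹'
          Dset I AV π AC AD) :=
  stmt2_general m n I AV hAVdiag π hπ AC AD

end
end

section
/- The blow-up time function u ↦ T*(u) is continuous on the set 𝒫 = {u ∈ ℝ^m × Ker A^D : T*(u) < ∞}. -/
open Filter Topology

noncomputable section

open scoped ENNReal

/-- `y` solves `ẏ = F(y)` on `[0,T)`. -/
def SolOn {d : ℕ} (F : (Fin d → ℝ) → (Fin d → ℝ)) (y : ℝ → Fin d → ℝ) (T : ℝ≥0∞) : Prop :=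
  ∀ t : ℝ, 0 ≤ t → ENNReal.ofReal t < T → HasDerivAt y (F (y t)) t

/-- `y` is a maximal solution of `ẏ = F(y)`, with lifetime `T`: it is a solution on `[0,T)`
and no solution with the same initial value exists on a longer interval. -/
def IsMaxSol {d : ℕ} (F : (Fin d → ℝ) → (Fin d → ℝ)) (y : ℝ → Fin d → ℝ) (T : ℝ≥0∞) : Prop :=
  0 < T ∧ SolOn F y T ∧
    ∀ (z : ℝ → Fin d → ℝ) (T' : ℝ≥0∞), T < T' → SolOn F z T' → z 0 ≠ y 0

/-- Lyapunov stability of an equilibrium point. -/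
def StablePt {d : ℕ} (F : (Fin d → ℝ) → (Fin d → ℝ)) (ν : Fin d → ℝ) : Prop :=
  ∀ ε : ℝ, 0 < ε → ∃ δ : ℝ, 0 < δ ∧ ∀ (y : ℝ → Fin d → ℝ) (T : ℝ≥0∞),
    IsMaxSol F y T → ‖y 0 - ν‖ < δ →
      ∀ t : ℝ, 0 < t → ENNReal.ofReal t < T → ‖y t - ν‖ < ε

/-- Asymptotic stability of an equilibrium point. -/
def AsympStablePt {d : ℕ} (F : (Fin d → ℝ) → (Fin d → ℝ)) (ν : Fin d → ℝ) : Prop :=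
  StablePt F ν ∧ ∃ δ : ℝ, 0 < δ ∧ ∀ (y : ℝ → Fin d → ℝ) (T : ℝ≥0∞),
    IsMaxSol F y T → ‖y 0 - ν‖ < δ → T = ⊤ ∧ Filter.Tendsto y Filter.atTop (nhds ν)


/-!
Lower semicontinuity of `T*` holds for any locally Lipschitz field: by Grönwall's inequality,
solutions with nearby initial value and parameter exist, and stay close, on every compact
subinterval of `[0, T*(u))`.

For upper semicontinuity, the triangular structure of `A^V` (negative diagonal, nonnegative entries
below it) gives, row by row, lower bounds on all coordinates and upper bounds on the coordinates
outside `I`, uniformly for bounded data. Hence if `T*(u) < ∞`, some coordinate `y_i` with `i ∈ I`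
exceeds any level `M` at some time `t₁ < T*(u)`; nearby solutions are still above `M` at `t₁`, and
the Riccati inequality `ẏ_i ≥ y_i² / 4 - C` makes them blow up before `t₁ + 8 / M`.
-/

open Set Metric Function

section Clamp

variable {d : ℕ}

-- A 1-Lipschitz retraction onto the sup-norm ball: composed with it, a locally Lipschitz field
-- becomes globally Lipschitz (so Picard–Lindelöf gives global solutions) without changing it on
-- the ball.
def supClamp (R : ℝ) (x : Fin d → ℝ) : Fin d → ℝ := fun i => max (-R) (min R (x i))

lemma norm_supClamp_le {R : ℝ} (hR : 0 ≤ R) (x : Fin d → ℝ) : ‖supClamp R x‖ ≤ R :=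
  (pi_norm_le_iff_of_nonneg hR).2 fun i =>
    abs_le.2 ⟨le_max_left _ _, max_le (by linarith) (min_le_left _ _)⟩

lemma supClamp_of_norm_le {R : ℝ} {x : Fin d → ℝ} (h : ‖x‖ ≤ R) : supClamp R x = x := by
  funext i
  obtain ⟨h₁, h₂⟩ := abs_le.1 ((norm_le_pi_norm x i).trans h)
  simp only [supClamp, min_eq_right h₂, max_eq_right h₁]

lemma lipschitzWith_supClamp (R : ℝ) : LipschitzWith 1 (supClamp (d := d) R) :=
  LipschitzWith.of_dist_le_mul fun x y => by
    rw [NNReal.coe_one, one_mul, dist_pi_le_iff dist_nonneg]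
    exact fun i => ((((LipschitzWith.eval i).const_min R).const_max (-R)).dist_le_mul x y).trans
      (by rw [NNReal.coe_one, one_mul])

end Clamp

section AutonomousODE

variable {E : Type*} [NormedAddCommGroup E] [NormedSpace ℝ E]

theorem exists_forall_mem_Ioo_hasDerivAt_of_lipschitzWith [CompleteSpace E] {G : E → E}
    {K C : NNReal} (hG : LipschitzWith K G) (hC : ∀ x, ‖G x‖ ≤ C) (x₀ : E) {τ : ℝ}
    (hτ : 0 ≤ τ) : ∃ y : ℝ → E, y 0 = x₀ ∧ ∀ t ∈ Ioo (-τ) τ, HasDerivAt y (G (y t)) t := by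
  have hpl : IsPicardLindelof (fun _ x => G x) (tmin := -τ) (tmax := τ)
      ⟨0, neg_nonpos.mpr hτ, hτ⟩ x₀ (C * ⟨τ, hτ⟩ + 1) 0 C K :=
    { lipschitzOnWith := fun _ _ => hG.lipschitzOnWith
      continuousOn := fun _ _ => continuousOn_const
      norm_le := fun _ _ x _ => hC x
      mul_max_le := by
        simp only [sub_zero, zero_sub, neg_neg, max_self, NNReal.coe_add, NNReal.coe_one,
          NNReal.coe_zero]
        rw [show ((C * ⟨τ, hτ⟩ : NNReal) : ℝ) = C * τ from rfl]
        linarith }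
  obtain ⟨y, hy0, hy⟩ := hpl.exists_eq_forall_mem_Icc_hasDerivWithinAt₀
  exact ⟨y, hy0, fun t ht => (hy t (Ioo_subset_Icc_self ht)).hasDerivAt (Icc_mem_nhds ht.1 ht.2)⟩

theorem LocallyLipschitz.eqOn_Icc_of_hasDerivAt {G : E → E} (hG : LocallyLipschitz G)
    {y z : ℝ → E} {b : ℝ} (hy : ∀ t ∈ Icc 0 b, HasDerivAt y (G (y t)) t)
    (hz : ∀ t ∈ Icc 0 b, HasDerivAt z (G (z t)) t) (h0 : y 0 = z 0) : EqOn y z (Icc 0 b) := by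
  have hyc : ContinuousOn y (Icc 0 b) := fun t ht => (hy t ht).continuousAt.continuousWithinAt
  have hzc : ContinuousOn z (Icc 0 b) := fun t ht => (hz t ht).continuousAt.continuousWithinAt
  obtain ⟨K, hK⟩ := hG.locallyLipschitzOn.exists_lipschitzOnWith_of_compact
    ((isCompact_Icc.image_of_continuousOn hyc).union (isCompact_Icc.image_of_continuousOn hzc))
  exact ODE_solution_unique_of_mem_Icc_right (v := fun _ => G) (fun _ _ => hK)
    hyc (fun t ht => (hy t (Ico_subset_Icc_self ht)).hasDerivWithinAt)
    (fun t ht => .inl (mem_image_of_mem y (Ico_subset_Icc_self ht)))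
    hzc (fun t ht => (hz t (Ico_subset_Icc_self ht)).hasDerivWithinAt)
    (fun t ht => .inr (mem_image_of_mem z (Ico_subset_Icc_self ht))) h0

end AutonomousODE

lemma gronwallBound_mul (c δ K ε x : ℝ) :
    gronwallBound (c * δ) K (c * ε) x = c * gronwallBound δ K ε x := by
  unfold gronwallBound
  split_ifs <;> ring

section SupNormODE

variable {d : ℕ}

theorem LocallyLipschitz.exists_hasDerivAt_comp_supClamp {G : (Fin d → ℝ) → (Fin d → ℝ)}
    (hG : LocallyLipschitz G) {R : ℝ} (hR : 0 ≤ R) (x₀ : Fin d → ℝ) {τ : ℝ} (hτ : 0 ≤ τ) :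
    ∃ y : ℝ → Fin d → ℝ, y 0 = x₀ ∧
      ∀ t ∈ Ioo (-τ) τ, HasDerivAt y (G (supClamp R (y t))) t := by
  have hball := isCompact_closedBall (0 : Fin d → ℝ) R
  obtain ⟨K, hK⟩ := hG.locallyLipschitzOn.exists_lipschitzOnWith_of_compact hball
  obtain ⟨C, hC⟩ := hball.exists_bound_of_continuousOn hG.continuous.continuousOn
  have hmaps : MapsTo (supClamp (d := d) R) univ (closedBall 0 R) := fun x _ =>
    mem_closedBall_zero_iff.2 (norm_supClamp_le hR x)
  exact exists_forall_mem_Ioo_hasDerivAt_of_lipschitzWith (C := C.toNNReal)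
    (lipschitzOnWith_univ.1 (hK.comp (lipschitzWith_supClamp R).lipschitzOnWith hmaps))
    (fun x => (hC _ (hmaps (mem_univ x))).trans (Real.le_coe_toNNReal C)) x₀ hτ

theorem LocallyLipschitz.exists_hasDerivAt_Ico_of_norm_le {G : (Fin d → ℝ) → (Fin d → ℝ)}
    (hG : LocallyLipschitz G) {y : ℝ → Fin d → ℝ} {b R : ℝ} (hb : 0 < b)
    (hy : ∀ t ∈ Ico 0 b, HasDerivAt y (G (y t)) t) (hR : ∀ t ∈ Ico 0 b, ‖y t‖ ≤ R) :
    ∃ b' > b, ∃ z : ℝ → Fin d → ℝ, z 0 = y 0 ∧ ∀ t ∈ Ico 0 b', HasDerivAt z (G (z t)) t := by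
  have hR0 : 0 ≤ R := (norm_nonneg _).trans (hR 0 ⟨le_rfl, hb⟩)
  obtain ⟨z, hz0, hz⟩ := hG.exists_hasDerivAt_comp_supClamp (by linarith : 0 ≤ R + 1) (y 0)
    (by linarith : 0 ≤ b + 1)
  have hzb : ∀ t ∈ Icc 0 b, HasDerivAt z (G (supClamp (R + 1) (z t))) t := fun t ht =>
    hz t ⟨by linarith [ht.1], by linarith [ht.2]⟩
  have heq : EqOn z y (Ico 0 b) := fun t ht =>
    (hG.comp (lipschitzWith_supClamp (R + 1)).locallyLipschitz).eqOn_Icc_of_hasDerivAt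
      (fun s hs => hzb s ⟨hs.1, hs.2.trans ht.2.le⟩)
      (fun s hs => by
        rw [comp_apply, supClamp_of_norm_le ((hR s ⟨hs.1, hs.2.trans_lt ht.2⟩).trans
          (by linarith))]
        exact hy s ⟨hs.1, hs.2.trans_lt ht.2⟩)
      hz0 ⟨ht.1, le_rfl⟩
  -- by continuity `z` stays in the ball where the clamp is inactive a little beyond `b`
  have hzbR : ‖z b‖ ≤ R := by
    have hclosed : IsClosed (Icc 0 b ∩ z ⁻¹' closedBall 0 R) :=
      ContinuousOn.preimage_isClosed_of_isClosed
        (fun t ht => (hzb t ht).continuousAt.continuousWithinAt) isClosed_Icc isClosed_closedBall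
    have hsub : closure (Ico 0 b) ⊆ Icc 0 b ∩ z ⁻¹' closedBall 0 R :=
      hclosed.closure_subset_iff.2 fun t ht =>
        ⟨Ico_subset_Icc_self ht, by simpa [heq ht] using hR t ht⟩
    simpa using (hsub (by rw [closure_Ico hb.ne]; exact ⟨hb.le, le_rfl⟩)).2
  obtain ⟨l, u, ⟨hlb, hbu⟩, hlu⟩ := mem_nhds_iff_exists_Ioo_subset.1
    ((hzb b ⟨hb.le, le_rfl⟩).continuousAt.norm.eventually_lt_const
      (show ‖z b‖ < R + 1 by linarith))
  refine ⟨min u (b + 1), lt_min hbu (by linarith), z, hz0, fun t ht => ?_⟩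
  have hzt : ‖z t‖ ≤ R + 1 := by
    rcases lt_or_ge t b with htb | htb
    · rw [heq ⟨ht.1, htb⟩]
      linarith [hR t ⟨ht.1, htb⟩]
    · exact (hlu ⟨by linarith, ht.2.trans_le (min_le_left _ _)⟩).le
  simpa [supClamp_of_norm_le hzt] using
    hz t ⟨by linarith [ht.1], by linarith [ht.2, min_le_right u (b + 1)]⟩

theorem LocallyLipschitz.eventually_exists_hasDerivAt_dist_le {P : Type*} [PseudoMetricSpace P]
    [ProperSpace P] {F : (Fin d → ℝ) → P → (Fin d → ℝ)} (hF : LocallyLipschitz (uncurry F))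
    {p₀ : P} {y₀ : ℝ → Fin d → ℝ} {b ε : ℝ} (hb : 0 ≤ b) (hε : 0 < ε)
    (hy₀ : ∀ t ∈ Icc 0 b, HasDerivAt y₀ (F (y₀ t) p₀) t) :
    ∀ᶠ q in 𝓝 (y₀ 0, p₀), ∃ z : ℝ → Fin d → ℝ, z 0 = q.1 ∧
      ∀ t ∈ Icc 0 b, HasDerivAt z (F (z t) q.2) t ∧ dist (z t) (y₀ t) ≤ ε := by
  have hy₀c : ContinuousOn y₀ (Icc 0 b) := fun t ht => (hy₀ t ht).continuousAt.continuousWithinAt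
  obtain ⟨R, hR⟩ := isCompact_Icc.exists_bound_of_continuousOn hy₀c
  have hR0 : 0 ≤ R := (norm_nonneg _).trans (hR 0 ⟨le_rfl, hb⟩)
  obtain ⟨K, hK⟩ := hF.locallyLipschitzOn.exists_lipschitzOnWith_of_compact
    ((isCompact_closedBall (0 : Fin d → ℝ) (R + ε)).prod (isCompact_closedBall p₀ 1))
  have hΦ : 1 ≤ gronwallBound 1 K K b := by
    simpa [gronwallBound_x0] using gronwallBound_mono zero_le_one K.2 K.2 hb
  have hδ : 0 < min 1 (ε / gronwallBound 1 K K b) := lt_min one_pos (by positivity)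
  filter_upwards [ball_mem_nhds _ hδ] with q hq
  set η := dist q (y₀ 0, p₀)
  have hq₁ : dist q.1 (y₀ 0) ≤ η := le_max_left _ _
  have hq₂ : dist q.2 p₀ ≤ 1 := (le_max_right _ _).trans (hq.le.trans (min_le_left _ _))
  have hηΦ : η * gronwallBound 1 K K b ≤ ε :=
    (le_div_iff₀ (by positivity)).1 (hq.le.trans (min_le_right _ _))
  have hmem : ∀ x, ‖x‖ ≤ R + ε → (x, q.2) ∈ closedBall (0 : Fin d → ℝ) (R + ε) ×ˢ closedBall p₀ 1 :=
    fun x hx => ⟨mem_closedBall_zero_iff.2 hx, hq₂⟩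
  have hlip : LipschitzWith K (fun x => F (supClamp (R + ε) x) q.2) := by
    have h := lipschitzOnWith_univ.1 (hK.comp
      ((LipschitzWith.prodMk_right q.2).comp (lipschitzWith_supClamp (R + ε))).lipschitzOnWith
      fun x _ => hmem _ (norm_supClamp_le (by linarith) x))
    rw [mul_one, mul_one] at h
    exact h
  obtain ⟨z, hz0, hz⟩ := LocallyLipschitz.exists_hasDerivAt_comp_supClamp
    (hF.comp (LipschitzWith.prodMk_right q.2).locallyLipschitz) (by linarith : 0 ≤ R + ε) q.1
    (by linarith : 0 ≤ b + 1)
  have hzb : ∀ t ∈ Icc 0 b, HasDerivAt z (F (supClamp (R + ε) (z t)) q.2) t := fun t ht =>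
    hz t ⟨by linarith [ht.1], by linarith [ht.2]⟩
  -- Grönwall: `y₀` solves the clamped equation with parameter `q.2` up to an error `K * η`
  have hclose : ∀ t ∈ Icc 0 b, dist (y₀ t) (z t) ≤ ε := by
    intro t ht
    have hgr := dist_le_of_approx_trajectories_ODE (v := fun _ x => F (supClamp (R + ε) x) q.2)
      (fun _ => hlip) hy₀c (fun s hs => (hy₀ s (Ico_subset_Icc_self hs)).hasDerivWithinAt)
      (εf := K * η) (fun s hs => by
        have hs' := hR s (Ico_subset_Icc_self hs)
        rw [supClamp_of_norm_le (by linarith)]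
        refine (hK.dist_le_mul (y₀ s, p₀) ⟨mem_closedBall_zero_iff.2 (by linarith),
          mem_closedBall_self zero_le_one⟩ (y₀ s, q.2) (hmem _ (by linarith))).trans ?_
        simpa [Prod.dist_eq] using mul_le_mul_of_nonneg_left
          (show dist p₀ q.2 ≤ η from (dist_comm p₀ q.2).trans_le (le_max_right _ _)) K.2)
      (fun s hs => (hzb s hs).continuousAt.continuousWithinAt)
      (fun s hs => (hzb s (Ico_subset_Icc_self hs)).hasDerivWithinAt) (εg := 0)
      (fun s _ => (dist_self _).le) (δ := η) (by rwa [hz0, dist_comm]) t ht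
    calc dist (y₀ t) (z t) ≤ gronwallBound (η * 1) K (η * K) t := by
          simpa [mul_comm] using hgr
      _ ≤ gronwallBound (η * 1) K (η * K) b :=
          gronwallBound_mono (by positivity) (by positivity) K.2 ht.2
      _ ≤ ε := by rwa [gronwallBound_mul]
  refine ⟨z, hz0, fun t ht => ⟨?_, by rw [dist_comm]; exact hclose t ht⟩⟩
  have hzt : ‖z t‖ ≤ R + ε := by
    have h := norm_sub_norm_le (z t) (y₀ t)
    rw [← dist_eq_norm, dist_comm] at h
    linarith [hclose t ht, hR t ht]
  simpa [supClamp_of_norm_le hzt] using hzb t ht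

end SupNormODE

section MaximalSolutions

variable {d : ℕ} {G : (Fin d → ℝ) → (Fin d → ℝ)} {y : ℝ → Fin d → ℝ} {T : ℝ≥0∞}

lemma IsMaxSol.hasDerivAt_of_ofReal_lt {b : ℝ} (hy : IsMaxSol G y T) (hb : ENNReal.ofReal b < T) :
    ∀ t ∈ Icc 0 b, HasDerivAt y (G (y t)) t := fun t ht =>
  hy.2.1 t ht.1 ((ENNReal.ofReal_le_ofReal ht.2).trans_lt hb)

lemma IsMaxSol.ofReal_le {z : ℝ → Fin d → ℝ} {b : ℝ} (hy : IsMaxSol G y T)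
    (hz : ∀ t ∈ Ico 0 b, HasDerivAt z (G (z t)) t) (h0 : z 0 = y 0) : ENNReal.ofReal b ≤ T :=
  not_lt.1 fun hlt => hy.2.2 z _ hlt
    (fun t ht htb => hz t ⟨ht, (ENNReal.ofReal_lt_ofReal_iff'.1 htb).1⟩) h0

theorem IsMaxSol.exists_lt_norm (hG : LocallyLipschitz G) (hy : IsMaxSol G y T) (hT : T ≠ ⊤)
    (R : ℝ) : ∃ t, 0 ≤ t ∧ t < T.toReal ∧ R < ‖y t‖ := by
  by_contra! hbdd
  have hsol : ∀ t ∈ Ico 0 T.toReal, HasDerivAt y (G (y t)) t := fun t ht =>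
    hy.2.1 t ht.1 ((ENNReal.ofReal_lt_iff_lt_toReal ht.1 hT).2 ht.2)
  obtain ⟨b', hb', z, hz0, hz⟩ := hG.exists_hasDerivAt_Ico_of_norm_le
    (ENNReal.toReal_pos hy.1.ne' hT) hsol fun t ht => hbdd t ht.1 ht.2
  exact (hy.ofReal_le hz hz0).not_gt ((ENNReal.lt_ofReal_iff_toReal_lt hT).2 hb')

theorem IsMaxSol.eventually_ofReal_lt {P : Type*} [PseudoMetricSpace P] [ProperSpace P]
    {F : (Fin d → ℝ) → P → (Fin d → ℝ)} (hF : LocallyLipschitz (uncurry F)) {p₀ : P}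
    {y₀ : ℝ → Fin d → ℝ} {T₀ : ℝ≥0∞} (hy₀ : IsMaxSol (F · p₀) y₀ T₀) {b : ℝ}
    (hb : ENNReal.ofReal b < T₀) :
    ∀ᶠ q in 𝓝 (y₀ 0, p₀), ∀ y T, y 0 = q.1 → IsMaxSol (F · q.2) y T → ENNReal.ofReal b < T := by
  obtain ⟨b', hb'0, hbb', hb'T⟩ := ENNReal.lt_iff_exists_real_btwn.1 hb
  filter_upwards [hF.eventually_exists_hasDerivAt_dist_le hb'0 one_pos
    (hy₀.hasDerivAt_of_ofReal_lt hb'T)] with q ⟨z, hz0, hz⟩ y T hy0 hy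
  exact hbb'.trans_le (hy.ofReal_le (fun t ht => (hz t (Ico_subset_Icc_self ht)).1)
    (hz0.trans hy0.symm))

end MaximalSolutions

lemma le_of_hasDerivAt_pos_at_level {h φ : ℝ → ℝ} {a b L : ℝ}
    (hd : ∀ t ∈ Icc a b, HasDerivAt h (φ t) t) (ha : L ≤ h a)
    (hL : ∀ t ∈ Ico a b, h t = L → 0 < φ t) : ∀ t ∈ Icc a b, L ≤ h t := fun t ht =>
  neg_le_neg_iff.1 <| image_le_of_deriv_right_lt_deriv_boundary (B := fun _ => -L) (B' := 0)
    (fun s hs => (hd s hs).neg.continuousAt.continuousWithinAt)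
    (fun s hs => (hd s (Ico_subset_Icc_self hs)).neg.hasDerivWithinAt) (neg_le_neg ha)
    (fun _ => hasDerivAt_const _ _)
    (fun s hs hs' => by simpa using hL s hs (neg_inj.1 hs')) ht

lemma min_le_of_mul_add_le_deriv {h φ : ℝ → ℝ} {κ c b : ℝ} (hκ : κ < 0)
    (hd : ∀ t ∈ Icc 0 b, HasDerivAt h (φ t) t) (hφ : ∀ t ∈ Icc 0 b, κ * h t + c ≤ φ t) :
    ∀ t ∈ Icc 0 b, min (h 0) (-(c / κ) - 1) ≤ h t := by
  refine le_of_hasDerivAt_pos_at_level hd (min_le_left _ _) fun t ht hht => ?_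
  have hlow : κ * (-(c / κ) - 1) ≤ κ * h t :=
    mul_le_mul_of_nonpos_left (hht ▸ min_le_right _ _) hκ.le
  have hκc : κ * (-(c / κ) - 1) = -c - κ := by field_simp [hκ.ne]
  linarith [hφ t (Ico_subset_Icc_self ht)]

lemma sub_lt_of_sq_div_four_sub_le_deriv {h φ : ℝ → ℝ} {a b C M : ℝ} (hab : a ≤ b) (hM : 0 < M)
    (hCM : 32 * C ≤ M ^ 2) (hd : ∀ t ∈ Icc a b, HasDerivAt h (φ t) t)
    (hφ : ∀ t ∈ Icc a b, h t ^ 2 / 4 - C ≤ φ t) (ha : M ≤ h a) : b - a < 8 / M := by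
  have hhalf : ∀ t ∈ Icc a b, M / 2 ≤ h t :=
    le_of_hasDerivAt_pos_at_level hd (by linarith) fun t ht hht => by
      nlinarith [hφ t (Ico_subset_Icc_self ht)]
  have hpos : ∀ t ∈ Icc a b, 0 < h t := fun t ht => by linarith [hhalf t ht]
  -- `-1/h` grows at rate at least `1/8` but stays in `(-1/M, 0)`
  have hψ : ∀ t ∈ Icc a b, HasDerivAt (fun s => -(h s)⁻¹) (φ t / h t ^ 2) t := fun t ht => by
    rw [show φ t / h t ^ 2 = -(-φ t / h t ^ 2) by ring]
    exact ((hd t ht).inv (hpos t ht).ne').neg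
  have hrate : ∀ t ∈ Icc a b, 1 / 8 ≤ φ t / h t ^ 2 := fun t ht => by
    rw [le_div_iff₀ (pow_pos (hpos t ht) 2)]
    nlinarith [hφ t ht, hhalf t ht]
  have hmvt := (convex_Icc a b).mul_sub_le_image_sub_of_le_deriv
    (fun t ht => (hψ t ht).continuousAt.continuousWithinAt)
    (fun t ht => (hψ t (interior_subset ht)).differentiableAt.differentiableWithinAt)
    (fun t ht => (hψ t (interior_subset ht)).deriv ▸ hrate t (interior_subset ht))
    a ⟨le_rfl, hab⟩ b ⟨hab, le_rfl⟩ hab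
  have hb : 0 < (h b)⁻¹ := inv_pos.2 (hpos b ⟨hab, le_rfl⟩)
  have ha' : (h a)⁻¹ ≤ M⁻¹ := inv_anti₀ hM ha
  rw [div_eq_mul_inv]
  linarith

lemma Fin.exists_forall_of_strongRec {m : ℕ} (P : ℝ → Fin m → Prop)
    (hmono : ∀ {β β'} i, β ≤ β' → P β i → P β' i)
    (hstep : ∀ β i, (∀ k < i, P β k) → ∃ β', P β' i) : ∃ β, ∀ i, P β i := by
  suffices h : ∀ j : ℕ, ∃ β, ∀ i : Fin m, (i : ℕ) < j → P β i from
    (h m).imp fun β hβ i => hβ i i.isLt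
  intro j
  induction j with
  | zero => exact ⟨0, fun i hi => absurd hi (Nat.not_lt_zero _)⟩
  | succ j ih =>
    obtain ⟨β, hβ⟩ := ih
    by_cases hj : j < m
    · obtain ⟨β', hβ'⟩ := hstep β ⟨j, hj⟩ fun k hk => hβ k hk
      refine ⟨max β β', fun i hi => ?_⟩
      rcases Nat.lt_succ_iff_lt_or_eq.1 hi with hi | hi
      · exact hmono i (le_max_left _ _) (hβ i hi)
      · exact hmono i (le_max_right _ _) ((show i = ⟨j, hj⟩ from Fin.ext hi) ▸ hβ')
    · exact ⟨β, fun i hi => hβ i (by omega)⟩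

section Riccati

variable {m n : ℕ} (I : Finset (Fin m)) (AV : Matrix (Fin m) (Fin m) ℝ)
  (π : Fin m → Matrix (Fin n) (Fin n) ℝ) (AC : Matrix (Fin m) (Fin n) ℝ)

/-- `Σ_{k < i} A^V_{ik} x_k`, the part of the `i`-th row of (Ric-V) below the diagonal. -/
def lowerSum (i : Fin m) (x : Fin m → ℝ) : ℝ := ∑ k ∈ Finset.univ.filter (· < i), AV i k * x k

lemma lowerSum_mono (hAVoff : ∀ i k : Fin m, i ≠ k → 0 ≤ AV i k) (i : Fin m) {x x' : Fin m → ℝ}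
    (h : ∀ k < i, x k ≤ x' k) : lowerSum AV i x ≤ lowerSum AV i x' :=
  Finset.sum_le_sum fun k hk =>
    mul_le_mul_of_nonneg_left (h k (Finset.mem_filter.1 hk).2)
      (hAVoff i k (Finset.mem_filter.1 hk).2.ne')

lemma fRic_eq (v : Fin m → ℝ) (w : Fin n → ℝ) (i : Fin m) :
    fRic I AV π AC v w i = 1 / 2 * v i ^ 2 * (if i ∈ I then 1 else 0) + AV i i * v i
      + lowerSum AV i v + gfun π AC w i := by
  have hIic : Finset.univ.filter (· ≤ i) = insert i (Finset.univ.filter (· < i)) := by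
    ext k
    simp [le_iff_lt_or_eq, or_comm]
  rw [fRic, hIic, Finset.sum_insert (by simp), lowerSum]
  ring

lemma contDiff_uncurry_fRic : ContDiff ℝ 1 (uncurry (fRic I AV π AC)) := by
  rw [contDiff_pi]
  intro i
  unfold uncurry fRic gfun
  fun_prop

lemma locallyLipschitz_fRic (w : Fin n → ℝ) : LocallyLipschitz (fRic I AV π AC · w) := by
  refine ContDiff.locallyLipschitz (𝕂 := ℝ) (contDiff_pi.2 fun i => ?_)
  unfold fRic gfun
  fun_prop

lemma continuous_gfun : Continuous (gfun π AC) := by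
  rw [continuous_pi_iff]
  intro i
  unfold gfun
  fun_prop

def IsRicSolOn (w : Fin n → ℝ) (y : ℝ → Fin m → ℝ) (b : ℝ) : Prop :=
  ∀ t ∈ Icc 0 b, HasDerivAt y (fRic I AV π AC (y t) w) t

variable {I AV π AC}

lemma IsRicSolOn.hasDerivAt_coord {w : Fin n → ℝ} {y : ℝ → Fin m → ℝ} {b : ℝ}
    (hy : IsRicSolOn I AV π AC w y b) (i : Fin m) :
    ∀ t ∈ Icc 0 b, HasDerivAt (y · i) (fRic I AV π AC (y t) w i) t := fun t ht =>
  hasDerivAt_pi.1 (hy t ht) i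

variable (hAVoff : ∀ i k : Fin m, i ≠ k → 0 ≤ AV i k) (hAVdiag : ∀ i : Fin m, AV i i < 0)
include hAVoff hAVdiag

theorem exists_coord_lower_bound (Γ B : ℝ) : ∃ β : ℝ, ∀ w y b, (∀ i, -Γ ≤ gfun π AC w i) →
    ‖y 0‖ ≤ B → IsRicSolOn I AV π AC w y b → ∀ t ∈ Icc 0 b, ∀ i, -β ≤ y t i := by
  obtain ⟨β, hβ⟩ := Fin.exists_forall_of_strongRec (fun β i => ∀ w y b,
      (∀ i, -Γ ≤ gfun π AC w i) → ‖y 0‖ ≤ B → IsRicSolOn I AV π AC w y b →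
        ∀ t ∈ Icc 0 b, -β ≤ y t i)
    (fun i hββ' h w y b hg hy0 hy t ht => (neg_le_neg hββ').trans (h w y b hg hy0 hy t ht))
    fun β i hlow => by
      refine ⟨max B (((lowerSum AV i fun _ => -β) - Γ) / AV i i + 1),
        fun w y b hg hy0 hy t ht => ?_⟩
      have hy0i : -B ≤ y 0 i := (abs_le.1 ((norm_le_pi_norm (y 0) i).trans hy0)).1
      have h := min_le_of_mul_add_le_deriv (c := (lowerSum AV i fun _ => -β) - Γ)
        (hAVdiag i) (hy.hasDerivAt_coord i) (fun s hs => ?_) t ht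
      · rcases min_le_iff.1 h with h | h <;>
          linarith [le_max_left B (((lowerSum AV i fun _ => -β) - Γ) / AV i i + 1),
            le_max_right B (((lowerSum AV i fun _ => -β) - Γ) / AV i i + 1)]
      · have hsum := lowerSum_mono AV hAVoff i fun k hk => hlow k hk w y b hg hy0 hy s hs
        have hsq : 0 ≤ 1 / 2 * y s i ^ 2 * (if i ∈ I then 1 else 0) := by positivity
        rw [fRic_eq]
        linarith [hg i]
  exact ⟨β, fun w y b hg hy0 hy t ht i => hβ i w y b hg hy0 hy t ht⟩

theorem exists_coord_upper_bound (Γ B R : ℝ) : ∃ M : ℝ, ∀ w y b, (∀ i, gfun π AC w i ≤ Γ) →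
    ‖y 0‖ ≤ B → IsRicSolOn I AV π AC w y b → (∀ t ∈ Icc 0 b, ∀ i ∈ I, y t i ≤ R) →
      ∀ t ∈ Icc 0 b, ∀ i, y t i ≤ M := by
  obtain ⟨M, hM⟩ := Fin.exists_forall_of_strongRec (fun M i => ∀ w y b,
      (∀ i, gfun π AC w i ≤ Γ) → ‖y 0‖ ≤ B → IsRicSolOn I AV π AC w y b →
        (∀ t ∈ Icc 0 b, ∀ i ∈ I, y t i ≤ R) → ∀ t ∈ Icc 0 b, y t i ≤ M)
    (fun i hMM' h w y b hg hy0 hy hR t ht => (h w y b hg hy0 hy hR t ht).trans hMM')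
    fun M i hup => by
      by_cases hi : i ∈ I
      · exact ⟨R, fun w y b _ _ _ hR t ht => hR t ht i hi⟩
      -- off `I` the `i`-th equation is linear with a damping diagonal coefficient
      refine ⟨max B ((-(lowerSum AV i fun _ => M) - Γ) / AV i i + 1),
        fun w y b hg hy0 hy hR t ht => ?_⟩
      have hy0i : y 0 i ≤ B := (abs_le.1 ((norm_le_pi_norm (y 0) i).trans hy0)).2
      have h := min_le_of_mul_add_le_deriv (h := fun s => -y s i)
        (φ := fun s => -fRic I AV π AC (y s) w i) (c := -(lowerSum AV i fun _ => M) - Γ)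
        (hAVdiag i) (fun s hs => (hy.hasDerivAt_coord i s hs).neg) (fun s hs => ?_) t ht
      · rcases min_le_iff.1 h with h | h <;>
          linarith [le_max_left B ((-(lowerSum AV i fun _ => M) - Γ) / AV i i + 1),
            le_max_right B ((-(lowerSum AV i fun _ => M) - Γ) / AV i i + 1)]
      · have hsum := lowerSum_mono AV hAVoff i fun k hk => hup k hk w y b hg hy0 hy hR s hs
        rw [fRic_eq, if_neg hi]
        linarith [hg i]
  exact ⟨M, fun w y b hg hy0 hy hR t ht i => hM i w y b hg hy0 hy hR t ht⟩

theorem exists_lifetime_le_of_le_coord (Γ B : ℝ) : ∃ C : ℝ, ∀ w y T,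
    (∀ i, -Γ ≤ gfun π AC w i) → ‖y 0‖ ≤ B → IsMaxSol (fRic I AV π AC · w) y T →
      ∀ i ∈ I, ∀ t₁ ≥ 0, ∀ M, 0 < M → 32 * C ≤ M ^ 2 → M ≤ y t₁ i →
        T ≤ ENNReal.ofReal (t₁ + 8 / M) := by
  obtain ⟨β, hβ⟩ := exists_coord_lower_bound hAVoff hAVdiag Γ B
  obtain ⟨C, hC⟩ := (eventually_all.2 fun i : Fin m =>
    eventually_ge_atTop (AV i i ^ 2 - (lowerSum AV i fun _ => -β) + Γ)).exists
  refine ⟨C, fun w y T hg hy0 hy i hi t₁ ht₁ M hM hCM hMy => not_lt.1 fun hT => ?_⟩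
  have hsol : IsRicSolOn I AV π AC w y (t₁ + 8 / M) := hy.hasDerivAt_of_ofReal_lt hT
  have h8M : 0 < 8 / M := by positivity
  refine (sub_lt_of_sq_div_four_sub_le_deriv (by linarith) hM hCM
    (fun t ht => hsol.hasDerivAt_coord i t ⟨ht₁.trans ht.1, ht.2⟩) (fun t ht => ?_) hMy).ne
    (by ring)
  have hsum := lowerSum_mono AV hAVoff i fun k _ =>
    hβ w y _ hg hy0 hsol t ⟨ht₁.trans ht.1, ht.2⟩ k
  rw [fRic_eq, if_pos hi]
  -- `y²/2 + a y ≥ y²/4 - a²`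
  nlinarith [sq_nonneg (y t i / 2 + AV i i), hg i, hC i]

theorem IsMaxSol.exists_le_coord {w : Fin n → ℝ} {y : ℝ → Fin m → ℝ} {T : ℝ≥0∞}
    (hy : IsMaxSol (fRic I AV π AC · w) y T) (hT : T ≠ ⊤) (R : ℝ) :
    ∃ t, 0 ≤ t ∧ t < T.toReal ∧ ∃ i ∈ I, R ≤ y t i := by
  by_contra! hsmall
  have hg : ∀ i, |gfun π AC w i| ≤ ‖gfun π AC w‖ := fun i => norm_le_pi_norm (gfun π AC w) i
  obtain ⟨β, hβ⟩ := exists_coord_lower_bound hAVoff hAVdiag ‖gfun π AC w‖ ‖y 0‖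
  obtain ⟨M, hM⟩ := exists_coord_upper_bound hAVoff hAVdiag ‖gfun π AC w‖ ‖y 0‖ R
  obtain ⟨t, ht0, htT, hyt⟩ :=
    hy.exists_lt_norm (locallyLipschitz_fRic I AV π AC w) hT (max (max M β) 0)
  have hsol : IsRicSolOn I AV π AC w y t :=
    hy.hasDerivAt_of_ofReal_lt ((ENNReal.ofReal_lt_iff_lt_toReal ht0 hT).2 htT)
  refine hyt.not_ge ((pi_norm_le_iff_of_nonneg (le_max_right _ _)).2 fun i => abs_le.2 ⟨?_, ?_⟩)
  · linarith [le_max_right M β, le_max_left (max M β) 0,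
      hβ w y t (fun i => (abs_le.1 (hg i)).1) le_rfl hsol t ⟨ht0, le_rfl⟩ i]
  · linarith [le_max_left M β, le_max_left (max M β) 0,
      hM w y t (fun i => (abs_le.1 (hg i)).2) le_rfl hsol
        (fun s hs i hi => (hsmall s hs.1 (hs.2.trans_lt htT) i hi).le) t ⟨ht0, le_rfl⟩ i]

theorem IsMaxSol.eventually_lt_ofReal {w₀ : Fin n → ℝ} {y₀ : ℝ → Fin m → ℝ} {T₀ : ℝ≥0∞}
    (hy₀ : IsMaxSol (fRic I AV π AC · w₀) y₀ T₀) {b : ℝ} (hb : T₀ < ENNReal.ofReal b) :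
    ∀ᶠ q in 𝓝 (y₀ 0, w₀), ∀ y T, y 0 = q.1 → IsMaxSol (fRic I AV π AC · q.2) y T →
      T < ENNReal.ofReal b := by
  have hT₀ : T₀ ≠ ⊤ := hb.ne_top
  obtain ⟨C, hC⟩ :=
    exists_lifetime_le_of_le_coord hAVoff hAVdiag (‖gfun π AC w₀‖ + 1) (‖y₀ 0‖ + 1)
  obtain ⟨M, hM, hCM, hMb⟩ : ∃ M, 0 < M ∧ 32 * C ≤ M ^ 2 ∧ 8 / M < b - T₀.toReal :=
    ((eventually_gt_atTop 0).and (((tendsto_pow_atTop two_ne_zero).eventually_ge_atTop _).and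
      ((tendsto_const_nhds.div_atTop tendsto_id).eventually_lt_const
        (sub_pos.2 (ENNReal.toReal_lt_of_lt_ofReal hb))))).exists
  have h8M : 0 < 8 / M := by positivity
  have hT₀b : T₀.toReal + 8 / M < b := by linarith
  obtain ⟨t₁, ht₁0, ht₁T, i, hi, hMy₀⟩ := hy₀.exists_le_coord hAVoff hAVdiag hT₀ (M + 1)
  have ht₁ : ENNReal.ofReal t₁ < T₀ := (ENNReal.ofReal_lt_iff_lt_toReal ht₁0 hT₀).2 ht₁T
  have hF := (contDiff_uncurry_fRic I AV π AC).locallyLipschitz (𝕂 := ℝ)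
  filter_upwards [hF.eventually_exists_hasDerivAt_dist_le ht₁0 one_pos
      (hy₀.hasDerivAt_of_ofReal_lt ht₁),
    hy₀.eventually_ofReal_lt hF ht₁,
    (((continuous_gfun π AC).comp continuous_snd).norm.tendsto _).eventually_lt_const
      (lt_add_one _),
    (continuous_fst.norm.tendsto _).eventually_lt_const (lt_add_one _)]
    with q ⟨z, hz0, hz⟩ hTq hgq hvq y T hy0 hy
  have hyz : EqOn y z (Icc 0 t₁) := (locallyLipschitz_fRic I AV π AC q.2).eqOn_Icc_of_hasDerivAt
    (hy.hasDerivAt_of_ofReal_lt (hTq y T hy0 hy)) (fun t ht => (hz t ht).1) (hy0.trans hz0.symm)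
  have hMy : M ≤ y t₁ i := by
    have hdist := (dist_le_pi_dist (z t₁) (y₀ t₁) i).trans (hz t₁ ⟨ht₁0, le_rfl⟩).2
    rw [hyz ⟨ht₁0, le_rfl⟩]
    linarith [(abs_le.1 ((Real.dist_eq _ _).symm.trans_le hdist)).1]
  have hg : ∀ j, -(‖gfun π AC w₀‖ + 1) ≤ gfun π AC q.2 j := fun j => by
    have := (Real.norm_eq_abs _).symm.trans_le (norm_le_pi_norm (gfun π AC q.2) j)
    simp only [comp_apply] at hgq
    linarith [neg_abs_le (gfun π AC q.2 j)]
  exact (hC q.2 y T hg (hy0 ▸ hvq.le) hy i hi t₁ ht₁0 M hM hCM hMy).trans_lt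
    ((ENNReal.ofReal_lt_ofReal_iff (by linarith [ENNReal.toReal_nonneg (a := T₀)])).2
      (by linarith))

end Riccati

theorem stmt10_general (m n : ℕ)
    (I : Finset (Fin m))
    (AV : Matrix (Fin m) (Fin m) ℝ)
    (hAVdiag : ∀ i : Fin m, AV i i < 0)
    (hAVoff : ∀ i k : Fin m, i ≠ k → 0 ≤ AV i k)
    (π : Fin m → Matrix (Fin n) (Fin n) ℝ)
    (AC : Matrix (Fin m) (Fin n) ℝ) (AD : Matrix (Fin n) (Fin n) ℝ)
    (Tstar : (Fin m → ℝ) → (Fin n → ℝ) → ℝ≥0∞)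
    (hTstar : ∀ (v : Fin m → ℝ) (w : Fin n → ℝ), AD.mulVec w = 0 →
      ∃ y : ℝ → Fin m → ℝ, y 0 = v ∧
        IsMaxSol (fun x => fRic I AV π AC x w) y (Tstar v w)) :
    ContinuousOn (fun p : (Fin m → ℝ) × (Fin n → ℝ) => (Tstar p.1 p.2).toReal)
      {p : (Fin m → ℝ) × (Fin n → ℝ) | AD.mulVec p.2 = 0 ∧ Tstar p.1 p.2 ≠ ⊤} := by
  rintro ⟨v₀, w₀⟩ ⟨hAD, hT₀⟩
  obtain ⟨y₀, rfl, hy₀⟩ := hTstar v₀ w₀ hAD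
  have hsol : ∀ᶠ q in 𝓝[{q | AD.mulVec q.2 = 0 ∧ Tstar q.1 q.2 ≠ ⊤}] (y₀ 0, w₀),
      ∃ y, y 0 = q.1 ∧ IsMaxSol (fRic I AV π AC · q.2) y (Tstar q.1 q.2) ∧ Tstar q.1 q.2 ≠ ⊤ :=
    eventually_nhdsWithin_of_forall fun q hq =>
      (hTstar q.1 q.2 hq.1).imp fun y hy => ⟨hy.1, hy.2, hq.2⟩
  refine tendsto_order.2 ⟨fun a ha => ?_, fun b hb => ?_⟩
  · have ha' : ENNReal.ofReal a < Tstar (y₀ 0) w₀ := by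
      rw [← ENNReal.ofReal_toReal hT₀]
      exact ENNReal.ofReal_lt_ofReal_iff'.2 ⟨ha, ENNReal.toReal_pos hy₀.1.ne' hT₀⟩
    filter_upwards [nhdsWithin_le_nhds (hy₀.eventually_ofReal_lt
      (contDiff_uncurry_fRic I AV π AC).locallyLipschitz ha'), hsol] with q hq ⟨y, hy0, hy, hT⟩
    have := hq y _ hy0 hy
    rw [← ENNReal.ofReal_toReal hT] at this
    exact (ENNReal.ofReal_lt_ofReal_iff'.1 this).1
  · filter_upwards [nhdsWithin_le_nhds (hy₀.eventually_lt_ofReal hAVoff hAVdiag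
      ((ENNReal.lt_ofReal_iff_toReal_lt hT₀).2 hb)), hsol] with q hq ⟨y, hy0, hy, _⟩
    exact ENNReal.toReal_lt_of_lt_ofReal (hq y _ hy0 hy)

/-- the blow-up time `u ↦ T*(u)` is continuous on
`𝒫 = {u ∈ ℝ^m × Ker A^D : T*(u) < ∞}`. -/
theorem stmt10 (m n : ℕ) (hm : 1 ≤ m)
    (I : Finset (Fin m)) (hI : I.Nonempty)
    (AV : Matrix (Fin m) (Fin m) ℝ)
    (hAVtri : ∀ i k : Fin m, i < k → AV i k = 0)
    (hAVdiag : ∀ i : Fin m, AV i i < 0)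
    (hAVoff : ∀ i k : Fin m, i ≠ k → 0 ≤ AV i k)
    (π : Fin m → Matrix (Fin n) (Fin n) ℝ)
    (hπ : ∀ i, (π i).PosSemidef)
    (AC : Matrix (Fin m) (Fin n) ℝ) (AD : Matrix (Fin n) (Fin n) ℝ)
    (Tstar : (Fin m → ℝ) → (Fin n → ℝ) → ℝ≥0∞)
    (hTstar : ∀ (v : Fin m → ℝ) (w : Fin n → ℝ), AD.mulVec w = 0 →
      ∃ y : ℝ → Fin m → ℝ, y 0 = v ∧
        IsMaxSol (fun x => fRic I AV π AC x w) y (Tstar v w)) :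
    ContinuousOn (fun p : (Fin m → ℝ) × (Fin n → ℝ) => (Tstar p.1 p.2).toReal)
      {p : (Fin m → ℝ) × (Fin n → ℝ) | AD.mulVec p.2 = 0 ∧ Tstar p.1 p.2 ≠ ⊤} :=
  stmt10_general m n I AV hAVdiag hAVoff π AC AD Tstar hTstar
end
end
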